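/- With $\Phi,\Psi$ as above and $b=128(\kappa_0+1)/\epsilon$, there is $r_0=r_0(\kappa_0,\epsilon)>0$ such that for all $0\le\rho<r<r_0$ with $\rho/r\le 1/\sqrt{2}$, $-\frac{\Phi'(r)}{1-r^{\alpha}}-\frac{2(\kappa+1)r^{2\kappa+1}}{r^{2\kappa+2}-\rho^{2\kappa+2}}\Psi(r)\ge \frac{(2\kappa+2-\epsilon/8)\,b\,\Phi(r)\,r^{2\kappa+1+\epsilon}}{r^{2\kappa+2}-\rho^{2\kappa+2}}$. -/

import Mathlib

/-!
Since `Φ'/Φ = 8(κ+1) r^{α-1} - (2κ+2) r^{2κ+1}/D` with `D = r^{2κ+2} - ρ^{2κ+2}`, and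
`b ε / 8 = 16(κ0+1)`, the difference of the two sides is, with `t = r^α`, `s = r^ε`,
`Φ(r)/D · (((2κ+2) r^{2κ+1} t - 8(κ+1) r^{α-1} D)/(1-t) + 16(κ0+1) r^{2κ+1} s)`.
As `D ≤ r^{2κ+2}` and `t ≤ 1/2`, the first summand is at least `-12(κ+1) t r^{2κ+1}`, and for
`r < 2^{-1/ε}` we have `t ≤ s`, so the second summand wins.
-/

/-- `Φ(r) = e^{a r^α} / (r^{2κ+2} - ρ^{2κ+2})`. -/
noncomputable def Phi (a α κ ρ : ℝ) (r : ℝ) : ℝ :=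
  Real.exp (a * r ^ α) / (r ^ (2 * κ + 2) - ρ ^ (2 * κ + 2))

/-- `Ψ(r) = (1 - b r^ε) Φ(r)`. -/
noncomputable def Psi (a b α ε κ ρ : ℝ) (r : ℝ) : ℝ :=
  (1 - b * r ^ ε) * Real.exp (a * r ^ α) / (r ^ (2 * κ + 2) - ρ ^ (2 * κ + 2))

theorem Psi_eq_mul_Phi (a b α ε κ ρ r : ℝ) :
    Psi a b α ε κ ρ r = (1 - b * r ^ ε) * Phi a α κ ρ r :=
  mul_div_assoc _ _ _

theorem hasDerivAt_Phi {a α κ ρ r : ℝ} (hr : r ≠ 0)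
    (hD : r ^ (2 * κ + 2) - ρ ^ (2 * κ + 2) ≠ 0) :
    HasDerivAt (Phi a α κ ρ)
      (Phi a α κ ρ r * (a * α * r ^ (α - 1) -
        (2 * κ + 2) * r ^ (2 * κ + 1) / (r ^ (2 * κ + 2) - ρ ^ (2 * κ + 2)))) r := by
  have hexp : HasDerivAt (fun x ↦ Real.exp (a * x ^ α))
      (Real.exp (a * r ^ α) * (a * (α * r ^ (α - 1)))) r :=
    ((Real.hasDerivAt_rpow_const (Or.inl hr)).const_mul a).exp
  have hden : HasDerivAt (fun x ↦ x ^ (2 * κ + 2) - ρ ^ (2 * κ + 2))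
      ((2 * κ + 2) * r ^ (2 * κ + 1)) r := by
    have h := Real.hasDerivAt_rpow_const (x := r) (p := 2 * κ + 2) (Or.inl hr)
    rw [show 2 * κ + 2 - 1 = 2 * κ + 1 by ring] at h
    exact h.sub_const _
  refine (hexp.div hden hD).congr_deriv ?_
  rw [Phi]
  generalize r ^ (2 * κ + 2) - ρ ^ (2 * κ + 2) = D at hD ⊢
  field_simp

theorem rpow_sub_one_mul_sub_rpow_le {α p ρ r : ℝ} (hr : 0 < r) (hρ : 0 ≤ ρ) :
    r ^ (α - 1) * (r ^ (p + 1) - ρ ^ (p + 1)) ≤ r ^ α * r ^ p := by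
  have hsplit : r ^ (α - 1) * r ^ (p + 1) = r ^ α * r ^ p := by
    rw [← Real.rpow_add hr, ← Real.rpow_add hr]
    ring_nf
  have := Real.rpow_nonneg hρ (p + 1)
  have := Real.rpow_pos_of_pos hr (α - 1)
  nlinarith

theorem rpow_le_rpow_and_rpow_lt_half {ε α r : ℝ} (hε : 0 < ε) (hεα : ε ≤ α) (hr : 0 < r)
    (hr0 : r < (1 / 2) ^ ε⁻¹) : r ^ α ≤ r ^ ε ∧ r ^ ε < 1 / 2 := by
  have hr1 : r ≤ 1 :=
    (hr0.trans_le (Real.rpow_le_one (by norm_num) (by norm_num) (inv_nonneg.2 hε.le))).le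
  exact ⟨Real.rpow_le_rpow_of_exponent_ge hr hr1 hεα,
    (Real.lt_rpow_inv_iff_of_pos hr.le (by norm_num) hε).1 hr0⟩

/-- The estimate after `Φ(r) = F`, `D = r^{2κ+2} - ρ^{2κ+2}`, `P = r^{2κ+1}`, `t = r^α`,
`s = r^ε` and `g = a α r^{α-1}` (the logarithmic derivative of `e^{a r^α}`) are abstracted. -/
theorem estimate_of_bounds {κ κ0 ε F D P g t s : ℝ} (hε : 0 < ε) (hκ : 0 ≤ κ + 1)
    (hF : 0 ≤ F) (hD : 0 < D) (hP : 0 ≤ P) (ht : 0 ≤ t) (ht2 : t ≤ 1 / 2)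
    (hts : (κ + 1) * t ≤ (κ0 + 1) * s) (hg : g * D ≤ 8 * (κ + 1) * t * P) :
    (2 * κ + 2 - ε / 8) * (128 * (κ0 + 1) / ε) * F * (P * s) / D
      ≤ -(F * (g - (2 * κ + 2) * P / D) / (1 - t))
        - 2 * (κ + 1) * P / D * ((1 - 128 * (κ0 + 1) / ε * s) * F) := by
  have h1t : 0 < 1 - t := by linarith
  have hdiff : -(F * (g - (2 * κ + 2) * P / D) / (1 - t))
        - 2 * (κ + 1) * P / D * ((1 - 128 * (κ0 + 1) / ε * s) * F)
        - (2 * κ + 2 - ε / 8) * (128 * (κ0 + 1) / ε) * F * (P * s) / D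
      = F / D * (((2 * κ + 2) * P * t - g * D) / (1 - t) + 16 * (κ0 + 1) * P * s) := by
    field_simp
    ring
  have hfirst : -(12 * (κ + 1) * t * P) ≤ ((2 * κ + 2) * P * t - g * D) / (1 - t) := by
    rw [le_div_iff₀ h1t]
    nlinarith [mul_nonneg (mul_nonneg hκ ht) hP]
  have hsecond : 12 * (κ + 1) * t * P ≤ 16 * (κ0 + 1) * P * s := by
    nlinarith [mul_nonneg (mul_nonneg hκ ht) hP, mul_le_mul_of_nonneg_right hts hP]
  rw [← sub_nonneg, hdiff]
  exact mul_nonneg (div_nonneg hF hD.le) (by linarith)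

theorem stmt_3_general (κ0 ε : ℝ) (hε : 0 < ε) :
    ∃ r0 : ℝ, 0 < r0 ∧
      ∀ κ α ρ : ℝ, ε ≤ α → α < 1 → 0 < κ → κ < κ0 → 0 ≤ ρ →
        ∀ r : ℝ, ρ < r → r < r0 → ρ / r ≤ 1 / Real.sqrt 2 →
          (2 * κ + 2 - ε / 8) * (128 * (κ0 + 1) / ε) *
              Phi (8 * (κ + 1) / α) α κ ρ r * r ^ (2 * κ + 1 + ε) /
              (r ^ (2 * κ + 2) - ρ ^ (2 * κ + 2))
            ≤ -(deriv (Phi (8 * (κ + 1) / α) α κ ρ) r / (1 - r ^ α))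
              - 2 * (κ + 1) * r ^ (2 * κ + 1) / (r ^ (2 * κ + 2) - ρ ^ (2 * κ + 2)) *
                Psi (8 * (κ + 1) / α) (128 * (κ0 + 1) / ε) α ε κ ρ r := by
  refine ⟨(1 / 2) ^ ε⁻¹, by positivity, ?_⟩
  intro κ α ρ hεα _ hκ hκκ0 hρ r hρr hr0 _
  have hr : 0 < r := hρ.trans_lt hρr
  have hα : 0 < α := hε.trans_le hεα
  have hD : 0 < r ^ (2 * κ + 2) - ρ ^ (2 * κ + 2) :=
    sub_pos.2 (Real.rpow_lt_rpow hρ hρr (by linarith))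
  obtain ⟨hts, hs⟩ := rpow_le_rpow_and_rpow_lt_half hε hεα hr hr0
  have hPhi : 0 ≤ Phi (8 * (κ + 1) / α) α κ ρ r := div_nonneg (Real.exp_pos _).le hD.le
  have hweight : (κ + 1) * r ^ α ≤ (κ0 + 1) * r ^ ε := by
    nlinarith [Real.rpow_nonneg hr.le α, Real.rpow_nonneg hr.le ε]
  have hg : 8 * (κ + 1) / α * α * r ^ (α - 1) * (r ^ (2 * κ + 2) - ρ ^ (2 * κ + 2))
      ≤ 8 * (κ + 1) * r ^ α * r ^ (2 * κ + 1) := by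
    have h := rpow_sub_one_mul_sub_rpow_le (α := α) (p := 2 * κ + 1) hr hρ
    rw [show 2 * κ + 1 + 1 = 2 * κ + 2 by ring] at h
    rw [div_mul_cancel₀ _ hα.ne', mul_assoc, mul_assoc (8 * (κ + 1))]
    exact mul_le_mul_of_nonneg_left h (by linarith)
  rw [(hasDerivAt_Phi hr.ne' hD.ne').deriv, Psi_eq_mul_Phi, Real.rpow_add hr]
  exact estimate_of_bounds hε (by linarith) hPhi hD (Real.rpow_nonneg hr.le _)
    (Real.rpow_nonneg hr.le _) (by linarith) hweight hg

/-- There is `r0 = r0(κ0, ε) > 0` such that for all `0 ≤ ρ < r < r0` with `ρ/r ≤ 1/√2`,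
`-Φ'(r)/(1-r^α) - (2(κ+1) r^{2κ+1}/(r^{2κ+2}-ρ^{2κ+2})) Ψ(r)
  ≥ (2κ+2-ε/8) b Φ(r) r^{2κ+1+ε} / (r^{2κ+2}-ρ^{2κ+2})`,
where `a = 8(κ+1)/α`, `b = 128(κ0+1)/ε`. -/
theorem stmt_3 (κ0 ε : ℝ) (hκ0 : 2 < κ0) (hε : 0 < ε) :
    ∃ r0 : ℝ, 0 < r0 ∧
      ∀ κ α ρ : ℝ, ε ≤ α → α < 1 → 0 < κ → κ < κ0 → 0 ≤ ρ →
        ∀ r : ℝ, ρ < r → r < r0 → ρ / r ≤ 1 / Real.sqrt 2 →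
          (2 * κ + 2 - ε / 8) * (128 * (κ0 + 1) / ε) *
              Phi (8 * (κ + 1) / α) α κ ρ r * r ^ (2 * κ + 1 + ε) /
              (r ^ (2 * κ + 2) - ρ ^ (2 * κ + 2))
            ≤ -(deriv (Phi (8 * (κ + 1) / α) α κ ρ) r / (1 - r ^ α))
              - 2 * (κ + 1) * r ^ (2 * κ + 1) / (r ^ (2 * κ + 2) - ρ ^ (2 * κ + 2)) *
                Psi (8 * (κ + 1) / α) (128 * (κ0 + 1) / ε) α ε κ ρ r :=
  stmt_3_general κ0 ε hε
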